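/- arXiv:2009.00760 — 2 statements merged into one kernel-verified Lean document; each statement's English description precedes it below -/
import Mathlib

section
/- For every integer m ≥ 1, every integer n ≥ 1, and every permutation σ of {1, ..., m}, the m-tuple of statistics (e_1, e_2, ..., e_m) on the set T^m_n of m-ary trees with n nodes is jointly equidistributed with its σ-permutation; that is, for every tuple (r_1, ..., r_m) of nonnegative integers, the number of trees T ∈ T^m_n with (e_1, ..., e_m)(T) = (r_1, ..., r_m) equals the number of trees T ∈ T^m_n with (e_1, ..., e_m)(T) = (r_{σ(1)}, ..., r_{σ(m)}). -/
/-- An `m`-ary tree: `leaf` denotes an absent subtree, and `node f` is a node whose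
(possibly absent) child in position `i` is `f i`.  The nodes of the tree are the
`node` constructors. -/
inductive MTree (m : ℕ) : Type
  | leaf : MTree m
  | node : (Fin m → MTree m) → MTree m

/-- The number of nodes of an `m`-ary tree. -/
def MTree.size {m : ℕ} : MTree m → ℕ
  | .leaf => 0
  | .node f => 1 + ∑ i, (f i).size

/-- `1` if the tree is present (a node), `0` if it is absent (a leaf). -/
def MTree.isNode {m : ℕ} : MTree m → ℕ
  | .leaf => 0
  | .node _ => 1

/-- `childCount i T` is the statistic `e_{i+1}(T)`: the number of nodes of `T` that are
children in position `i` (`0`-indexed, so position `i+1` in `1`-indexed terms)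
of their parent. -/
def MTree.childCount {m : ℕ} (i : Fin m) : MTree m → ℕ
  | .leaf => 0
  | .node f => (f i).isNode + ∑ j, (f j).childCount i

/-! Relabelling the child positions of every node by a permutation `σ` is a size-preserving
bijection of `m`-ary trees under which `e_i` of the image is `e_{σ i}` of the original. -/

namespace MTree

variable {m : ℕ}

def perm (σ : Equiv.Perm (Fin m)) : MTree m → MTree m
  | .leaf => .leaf
  | .node f => .node fun i => (f (σ i)).perm σ

theorem perm_perm (σ τ : Equiv.Perm (Fin m)) (T : MTree m) :
    (T.perm σ).perm τ = T.perm (σ * τ) := by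
  induction T with
  | leaf => rfl
  | node f ih => simp only [perm, ih]; rfl

theorem perm_one (T : MTree m) : T.perm 1 = T := by
  induction T with
  | leaf => rfl
  | node f ih => simp only [perm, ih]; rfl

def permEquiv (σ : Equiv.Perm (Fin m)) : MTree m ≃ MTree m where
  toFun := perm σ
  invFun := perm σ⁻¹
  left_inv T := by simp only [perm_perm, mul_inv_cancel, perm_one]
  right_inv T := by simp only [perm_perm, inv_mul_cancel, perm_one]

theorem size_perm (σ : Equiv.Perm (Fin m)) (T : MTree m) : (T.perm σ).size = T.size := by
  induction T with
  | leaf => rfl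
  | node f ih => simp only [perm, size, ih, Equiv.sum_comp σ fun i => (f i).size]

theorem isNode_perm (σ : Equiv.Perm (Fin m)) (T : MTree m) : (T.perm σ).isNode = T.isNode := by
  cases T <;> rfl

theorem childCount_perm (σ : Equiv.Perm (Fin m)) (i : Fin m) (T : MTree m) :
    (T.perm σ).childCount i = T.childCount (σ i) := by
  induction T with
  | leaf => rfl
  | node f ih =>
    simp only [perm, childCount, isNode_perm, ih, Equiv.sum_comp σ fun j => (f j).childCount (σ i)]

end MTree

theorem child_statistics_jointly_equidistributed_general (m n : ℕ)
    (σ : Equiv.Perm (Fin m)) (r : Fin m → ℕ) :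
    Nat.card {T : MTree m // T.size = n ∧ ∀ i, MTree.childCount i T = r i} =
    Nat.card {T : MTree m // T.size = n ∧ ∀ i, MTree.childCount i T = r (σ i)} :=
  Nat.card_congr <| (MTree.permEquiv σ).subtypeEquiv fun T => by
    simp only [MTree.permEquiv, Equiv.coe_fn_mk, MTree.size_perm, MTree.childCount_perm,
      σ.forall_congr_right (q := fun i => T.childCount i = r i)]

/-- For `m ≥ 1`, `n ≥ 1` and any permutation `σ` of the `m` child
positions, the `m`-statistic `(e_1, …, e_m)` on `m`-ary trees with `n` nodes is jointly
equidistributed with its `σ`-permutation. -/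
theorem child_statistics_jointly_equidistributed (m n : ℕ) (hm : 1 ≤ m) (hn : 1 ≤ n)
    (σ : Equiv.Perm (Fin m)) (r : Fin m → ℕ) :
    Nat.card {T : MTree m // T.size = n ∧ ∀ i, MTree.childCount i T = r i} =
    Nat.card {T : MTree m // T.size = n ∧ ∀ i, MTree.childCount i T = r (σ i)} :=
  child_statistics_jointly_equidistributed_general m n σ r
end

section
/- For every integer k ≥ 1, every k-Dyck path Q whose maximal suffix of down-steps has length n ≥ 1 has a unique decomposition Q = Q_0^{(0)} u Q_1^{(1)} u ⋯ Q_{kn-1}^{(kn-1)} u d^n, where each Q_j (0 ≤ j ≤ kn-1) is a k-Dyck path and Q_j^{(j)} denotes its j-lifting. -/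
/-- A step of a `k`-Dyck path: `true` is an up-step `u = (1,1)`,
`false` is a down-step `d = (1,-k)`. -/
abbrev DStep := Bool

/-- The height change produced by a step of a `k`-Dyck path. -/
def stepVal (k : ℕ) (s : DStep) : ℤ := if s then 1 else -(k : ℤ)

/-- The height of the path `P` (with steps `u = +1`, `d = -k`) after its first `j` steps,
starting at height `start`. -/
def height (k : ℕ) (start : ℤ) (P : List DStep) (j : ℕ) : ℤ :=
  start + ((P.take j).map (stepVal k)).sum

/-- `P` is a `k`-Dyck path: it starts and ends at height `0` and never goes below `0`.
Its down-size is `P.count false`, the number of its down-steps. -/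
def IsDyck (k : ℕ) (P : List DStep) : Prop :=
  (∀ j ≤ P.length, 0 ≤ height k 0 P j) ∧ height k 0 P P.length = 0

/-- The set of positions of peaks (occurrences of the factor `ud`) of `P`:
`j` is a peak position if step `j` is `u` and step `j+1` is `d`. -/
def peakSet (P : List DStep) : Finset ℕ :=
  (Finset.range P.length).filter fun j => P.getD j false = true ∧ P.getD (j+1) true = false

/-- The number of all peaks of `P` (run starting at height `start`) whose height is
`≡ i (mod k)`; the height of a peak `ud` is the height at the vertex between `u` and `d`. -/
def pkAll (k : ℕ) (start : ℤ) (i : ℕ) (P : List DStep) : ℕ :=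
  ((peakSet P).filter fun j => height k start P (j+1) % (k : ℤ) = (i : ℤ)).card

/-- `pkMod k i P` is the statistic `pk_i(P)`: the number of non-rightmost peaks of `P`
(starting at height `0`) whose height is `≡ i (mod k)`. -/
def pkMod (k : ℕ) (i : ℕ) (P : List DStep) : ℕ :=
  ((peakSet P).filter fun j =>
    (∃ j' ∈ peakSet P, j < j') ∧ height k 0 P (j+1) % (k : ℤ) = (i : ℤ)).card

/-- The statistic `pk(P)`: the total number of non-rightmost peaks of `P`. -/
def pkNR (P : List DStep) : ℕ :=
  ((peakSet P).filter fun j => ∃ j' ∈ peakSet P, j < j').card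

/-- The statistic `dd(P)`: the number of double descents (occurrences of the factor `dd`). -/
def ddCount (P : List DStep) : ℕ :=
  ((Finset.range P.length).filter fun j =>
    P.getD j true = false ∧ P.getD (j+1) true = false).card

/-- The combined statistic `(pk_0, …, pk_{k-1}, dd)`:
for `i < k` it is `pk_i`, and for `i = k` it is `dd`. -/
def pathStat (k : ℕ) (P : List DStep) (i : Fin (k+1)) : ℕ :=
  if (i : ℕ) < k then pkMod k i P else ddCount P

/-- The length of the maximal suffix of down-steps of `P`. -/
def downSuffixLen (P : List DStep) : ℕ := (P.reverse.takeWhile (fun s => !s)).length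

/-- The permutation `π_n` of `{0, …, kn-1}` (as a function on `ℕ`), which in cycle
notation is `(k-1,…,1,0)(2k-1,…,k+1,k)⋯(kn-1,…,k(n-1)+1,k(n-1))`:
`j ↦ j + k - 1` if `j ≡ 0 (mod k)`, and `j ↦ j - 1` otherwise. -/
def cyclicPerm (k : ℕ) (j : ℕ) : ℕ := if j % k = 0 then j + (k - 1) else j - 1

/-- `assembled k n f` is the path `f 0 ++ u ++ f 1 ++ u ++ ⋯ ++ f (kn-1) ++ u ++ d^n`,
i.e. the path `Q = Q_0^{(0)} u Q_1^{(1)} u ⋯ Q_{kn-1}^{(kn-1)} u d^n` with blocks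
`Q_j = f j` (the `j`-lifting only changes the starting height, not the steps). -/
def assembled (k n : ℕ) (f : ℕ → List DStep) : List DStep :=
  (List.ofFn fun j : Fin (k * n) => f (j : ℕ) ++ [true]).flatten ++ List.replicate n false

/-!
A path that never goes below height `0`, ends at height `m` and does not end with a down-step
splits uniquely as `Q_0 u Q_1 u ⋯ Q_{m-1} u` with `k`-Dyck blocks `Q_j`: the first block must end
at the last visit to height `0`, since afterwards `u Q_1 u ⋯` stays strictly positive while a
`k`-Dyck block returns to its starting height; what follows that `u` is again such a path, of end
height `m - 1`. Removing the down-suffix `d^n` from `Q` leaves such a path of end height `kn`.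
-/

/-- Meanders in the sense of Banderier–Flajolet. -/
def IsMeander (k : ℕ) (P : List DStep) : Prop := ∀ j ≤ P.length, 0 ≤ height k 0 P j

def joinBlocks (L : List (List DStep)) : List DStep := (L.map (· ++ [true])).flatten

section Height

variable {k : ℕ} {s : ℤ}

lemma height_zero (P : List DStep) : height k s P 0 = s := by simp [height]

lemma height_eq_add (P : List DStep) (j : ℕ) : height k s P j = s + height k 0 P j := by
  simp [height]

lemma height_succ {P : List DStep} {j : ℕ} (h : j < P.length) :
    height k s P (j + 1) = height k s P j + stepVal k P[j] := by
  simp only [height, List.take_add_one, List.getElem?_eq_getElem h, Option.toList_some,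
    List.map_append, List.sum_append, List.map_singleton, List.sum_singleton, add_assoc]

lemma height_cons_succ (x : DStep) (P : List DStep) (j : ℕ) :
    height k s (x :: P) (j + 1) = height k (s + stepVal k x) P j := by
  simp [height, add_assoc]

lemma height_take {P : List DStep} {i j : ℕ} (h : j ≤ i) :
    height k s (P.take i) j = height k s P j := by
  simp [height, List.take_take, Nat.min_eq_left h]

lemma height_append_of_le {A : List DStep} (B : List DStep) {j : ℕ} (h : j ≤ A.length) :
    height k s (A ++ B) j = height k s A j := by
  simp [height, List.take_append_of_le_length h]

lemma height_append_add (A B : List DStep) (j : ℕ) :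
    height k s (A ++ B) (A.length + j) = height k (height k s A A.length) B j := by
  simp [height, List.take_append, List.take_of_length_le, add_assoc]

lemma height_replicate_false (n : ℕ) :
    height k s (List.replicate n false) n = s - n * k := by
  simp [height, stepVal, List.sum_replicate, sub_eq_add_neg]

lemma eq_true_of_stepVal_pos {x : DStep} (h : 0 < stepVal k x) : x = true := by
  cases x
  · simp [stepVal] at h; omega
  · rfl

end Height

section Meander

variable {k : ℕ}

lemma IsDyck.isMeander {P : List DStep} (h : IsDyck k P) : IsMeander k P := h.1

lemma IsMeander.of_append {A B : List DStep} (h : IsMeander k (A ++ B)) : IsMeander k A :=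
  fun j hj => height_append_of_le B hj ▸ h j (by simp; omega)

lemma IsMeander.take {P : List DStep} (h : IsMeander k P) (i : ℕ) : IsMeander k (P.take i) :=
  fun j hj => by
    rw [List.length_take] at hj
    rw [height_take (by omega)]
    exact h j (by omega)

lemma IsMeander.eq_nil {P : List DStep} (hP : IsMeander k P) (hlast : P.getLast? ≠ some false)
    (hend : height k 0 P P.length = 0) : P = [] := by
  rcases List.eq_nil_or_concat' P with rfl | ⟨P', x, rfl⟩
  · rfl
  · obtain rfl : x = true := by simpa using hlast
    have h := hP.of_append P'.length le_rfl
    rw [List.length_append, height_append_add, List.length_singleton] at hend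
    rw [height_cons_succ, height_zero, stepVal, if_pos rfl] at hend
    omega

lemma height_dyck_append_cons {Q : List DStep} (hQ : IsDyck k Q) (R : List DStep) (j : ℕ) :
    height k 0 (Q ++ true :: R) (Q.length + (j + 1)) = 1 + height k 0 R j := by
  rw [height_append_add, hQ.2, height_cons_succ, height_eq_add]
  simp [stepVal]

lemma height_dyck_append_cons_pos {Q R : List DStep} (hQ : IsDyck k Q) (hR : IsMeander k R)
    {j : ℕ} (hQj : Q.length < j) (hj : j ≤ (Q ++ true :: R).length) :
    0 < height k 0 (Q ++ true :: R) j := by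
  obtain ⟨i, rfl⟩ : ∃ i, j = Q.length + (i + 1) := ⟨j - Q.length - 1, by omega⟩
  rw [height_dyck_append_cons hQ]
  have := hR i (by simp at hj; omega)
  omega

lemma isMeander_dyck_append_cons {Q R : List DStep} (hQ : IsDyck k Q) (hR : IsMeander k R) :
    IsMeander k (Q ++ true :: R) := by
  intro j hj
  by_cases hQj : j ≤ Q.length
  · rw [height_append_of_le _ hQj]
    exact hQ.isMeander j hQj
  · exact (height_dyck_append_cons_pos hQ hR (by omega) hj).le

lemma dyck_append_cons_inj {Q Q' R R' : List DStep} (hQ : IsDyck k Q) (hQ' : IsDyck k Q')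
    (hR : IsMeander k R) (hR' : IsMeander k R') (h : Q ++ true :: R = Q' ++ true :: R') :
    Q = Q' ∧ R = R' := by
  have no_shorter : ∀ {Q Q' R R' : List DStep}, IsDyck k Q → IsDyck k Q' → IsMeander k R →
      Q ++ true :: R = Q' ++ true :: R' → ¬ Q.length < Q'.length := by
    intro Q Q' R R' hQ hQ' hR h hlt
    have hpos := height_dyck_append_cons_pos hQ hR hlt (by rw [h]; simp)
    rw [h, height_append_of_le _ le_rfl, hQ'.2] at hpos
    exact lt_irrefl 0 hpos
  have hlen : Q.length = Q'.length :=
    le_antisymm (Nat.le_of_not_lt (no_shorter hQ' hQ hR' h.symm))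
      (Nat.le_of_not_lt (no_shorter hQ hQ' hR h))
  obtain ⟨rfl, hRR'⟩ := List.append_inj h hlen
  exact ⟨rfl, List.cons_injective hRR'⟩

lemma IsMeander.exists_dyck_append_cons {P : List DStep} (hP : IsMeander k P)
    (hend : height k 0 P P.length ≠ 0) :
    ∃ Q R, IsDyck k Q ∧ IsMeander k R ∧ P = Q ++ true :: R := by
  set s := Nat.findGreatest (fun j => height k 0 P j = 0) P.length
  have hs : height k 0 P s = 0 :=
    Nat.findGreatest_spec (P := fun j => height k 0 P j = 0) (Nat.zero_le _) (height_zero P)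
  have hsP : s < P.length :=
    lt_of_le_of_ne (Nat.findGreatest_le _) fun h => hend (h ▸ hs)
  have hafter : ∀ j, s < j → j ≤ P.length → 0 < height k 0 P j := fun j hsj hj =>
    lt_of_le_of_ne (hP j hj) (Ne.symm (Nat.findGreatest_is_greatest hsj hj))
  have hup : P[s] = true := by
    refine eq_true_of_stepVal_pos (k := k) ?_
    have := hafter (s + 1) (by omega) hsP
    rw [height_succ hsP, hs] at this
    simpa using this
  have hQ : IsDyck k (P.take s) := by
    refine ⟨hP.take s, ?_⟩
    rw [List.length_take_of_le hsP.le, height_take le_rfl, hs]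
  have hsplit : P = P.take s ++ true :: P.drop (s + 1) := by
    rw [← hup, ← List.drop_eq_getElem_cons hsP, List.take_append_drop]
  refine ⟨_, _, hQ, fun i hi => ?_, hsplit⟩
  have h := height_dyck_append_cons hQ (P.drop (s + 1)) i
  rw [List.length_take_of_le hsP.le, ← hsplit] at h
  have := hafter (s + (i + 1)) (by omega) (by simp at hi; omega)
  omega

lemma joinBlocks_nil : joinBlocks [] = [] := rfl

lemma joinBlocks_cons (Q : List DStep) (L : List (List DStep)) :
    joinBlocks (Q :: L) = Q ++ true :: joinBlocks L := by
  simp [joinBlocks]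

lemma joinBlocks_ofFn {m : ℕ} (f : Fin m → List DStep) :
    joinBlocks (List.ofFn f) = (List.ofFn fun j => f j ++ [true]).flatten := by
  simp [joinBlocks, List.map_ofFn, Function.comp_def]

lemma isMeander_joinBlocks {L : List (List DStep)} (hL : ∀ Q ∈ L, IsDyck k Q) :
    IsMeander k (joinBlocks L) := by
  induction L with
  | nil => intro j hj; simp [joinBlocks_nil, height]
  | cons Q L ih =>
    rw [joinBlocks_cons]
    exact isMeander_dyck_append_cons (hL Q (by simp)) (ih fun Q' hQ' => hL Q' (by simp [hQ']))

lemma joinBlocks_inj {L L' : List (List DStep)} (hL : ∀ Q ∈ L, IsDyck k Q)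
    (hL' : ∀ Q ∈ L', IsDyck k Q) (h : joinBlocks L = joinBlocks L') : L = L' := by
  induction L generalizing L' with
  | nil => cases L' <;> simp_all [joinBlocks_cons, joinBlocks_nil]
  | cons Q L ih =>
    cases L' with
    | nil => simp [joinBlocks_cons, joinBlocks_nil] at h
    | cons Q' L' =>
      simp only [List.forall_mem_cons] at hL hL'
      rw [joinBlocks_cons, joinBlocks_cons] at h
      obtain ⟨rfl, hJ⟩ := dyck_append_cons_inj hL.1 hL'.1 (isMeander_joinBlocks hL.2)
        (isMeander_joinBlocks hL'.2) h
      rw [ih hL.2 hL'.2 hJ]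

lemma IsMeander.exists_eq_joinBlocks_ofFn (m : ℕ) {P : List DStep} (hP : IsMeander k P)
    (hlast : P.getLast? ≠ some false) (hend : height k 0 P P.length = m) :
    ∃ g : Fin m → List DStep, (∀ j, IsDyck k (g j)) ∧ P = joinBlocks (List.ofFn g) := by
  induction m generalizing P with
  | zero => exact ⟨Fin.elim0, fun j => j.elim0, by simp [hP.eq_nil hlast hend, joinBlocks_nil]⟩
  | succ m ih =>
    obtain ⟨Q, R, hQ, hR, rfl⟩ := hP.exists_dyck_append_cons (by rw [hend]; omega)
    have hRend : height k 0 R R.length = m := by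
      have h := height_dyck_append_cons hQ R R.length
      rw [show Q.length + (R.length + 1) = (Q ++ true :: R).length by simp, hend] at h
      push_cast at h
      omega
    have hRlast : R.getLast? ≠ some false := by
      cases R <;> simp_all
    obtain ⟨g, hg, rfl⟩ := ih hR hRlast hRend
    refine ⟨Fin.cons Q g, Fin.cases hQ hg, ?_⟩
    rw [List.ofFn_succ, joinBlocks_cons]
    simp

end Meander

lemma exists_eq_append_replicate_downSuffixLen (Q : List DStep) :
    ∃ P : List DStep, P.getLast? ≠ some false ∧
      Q = P ++ List.replicate (downSuffixLen Q) false := by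
  refine ⟨(Q.reverse.dropWhile (fun s => !s)).reverse, ?_, ?_⟩
  · rw [List.getLast?_reverse]
    intro h
    simpa [h] using List.head?_dropWhile_not (fun s => !s) Q.reverse
  · have hdown : Q.reverse.takeWhile (fun s => !s) = List.replicate (downSuffixLen Q) false :=
      List.eq_replicate_iff.mpr ⟨rfl, fun b hb => by simpa using List.mem_takeWhile_imp hb⟩
    rw [← List.reverse_replicate, ← hdown, ← List.reverse_append, List.takeWhile_append_dropWhile,
      List.reverse_reverse]

theorem unique_decomposition_general (k n : ℕ) (Q : List DStep)
    (hQ : IsDyck k Q) (hsuf : downSuffixLen Q = n) :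
    ∃! f : Fin (k * n) → List DStep,
      (∀ j, IsDyck k (f j)) ∧
      Q = (List.ofFn fun j : Fin (k * n) => f j ++ [true]).flatten ++
            List.replicate n false := by
  obtain ⟨P, hlast, hQP⟩ := exists_eq_append_replicate_downSuffixLen Q
  rw [hsuf] at hQP
  have hP : IsMeander k P := (hQP ▸ hQ.isMeander).of_append
  have hPend : height k 0 P P.length = (k * n : ℕ) := by
    have h := hQ.2
    rw [hQP, List.length_append, List.length_replicate, height_append_add,
      height_replicate_false] at h
    push_cast
    linarith
  simp only [← joinBlocks_ofFn] at hQP ⊢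
  obtain ⟨g, hg, rfl⟩ := hP.exists_eq_joinBlocks_ofFn (k * n) hlast hPend
  refine ⟨g, ⟨hg, hQP⟩, fun f ⟨hf, hQf⟩ => List.ofFn_injective ?_⟩
  exact joinBlocks_inj (List.forall_mem_ofFn_iff.2 hf) (List.forall_mem_ofFn_iff.2 hg)
    (List.append_cancel_right (hQf.symm.trans hQP))

/-- Every `k`-Dyck path `Q` whose maximal suffix of down-steps has length
`n ≥ 1` decomposes uniquely as `Q = Q_0^{(0)} u Q_1^{(1)} u ⋯ Q_{kn-1}^{(kn-1)} u d^n`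
with each `Q_j` a `k`-Dyck path (a `j`-lifting has the same steps, started at height `j`). -/
theorem unique_decomposition (k n : ℕ) (hk : 1 ≤ k) (hn : 1 ≤ n) (Q : List DStep)
    (hQ : IsDyck k Q) (hsuf : downSuffixLen Q = n) :
    ∃! f : Fin (k * n) → List DStep,
      (∀ j, IsDyck k (f j)) ∧
      Q = (List.ofFn fun j : Fin (k * n) => f j ++ [true]).flatten ++
            List.replicate n false :=
  unique_decomposition_general k n Q hQ hsuf
end
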